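/- arXiv:1301.4446 — 2 statements merged into one kernel-verified Lean document; each statement's English description precedes it below -/
import Mathlib

section
/- Let G be a group and H ≤ G a subgroup such that (1) there are only finitely many conjugacy classes of subgroups of G isomorphic to H, (2) Out(H) is finite, and (3) the center Z(G) has finite index in the centralizer C_G(H). Then H is an Aut-splitting subgroup of G. -/
section Defs

variable (G : Type*) [Group G]

/-- The subgroup of inner automorphisms of `G`. -/
def Inn : Subgroup (MulAut G) := (MulAut.conj : G →* MulAut G).range

instance Inn.normal : (Inn G).Normal := by
  constructor
  intro n hn φ
  obtain ⟨g, rfl⟩ := hn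
  refine ⟨φ g, ?_⟩
  ext x
  simp only [MulAut.conj_apply, MulAut.mul_apply, map_mul, map_inv, MulAut.inv_def,
    MulEquiv.apply_symm_apply]

/-- The outer automorphism group `Out(G) = Aut(G)/Inn(G)`. -/
def Out := MulAut G ⧸ Inn G

instance : Group (Out G) := inferInstanceAs (Group (MulAut G ⧸ Inn G))

/-- The canonical projection `Aut(G) → Out(G)`. -/
def outProj : MulAut G →* Out G := QuotientGroup.mk' (Inn G)

/-- A surjective homomorphism `f : A → B` splits virtually if it admits a section on some
finite-index subgroup of `B`. -/
def SplitsVirtually {A B : Type*} [Group A] [Group B] (f : A →* B) : Prop :=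
  ∃ B' : Subgroup B, B'.FiniteIndex ∧ ∃ s : (↥B') →* A, ∀ x : B', f (s x) = (x : B)

/-- A group is residually finite if every nontrivial element survives in some finite quotient. -/
def ResiduallyFinite (G : Type*) [Group G] : Prop :=
  ∀ g : G, g ≠ 1 → ∃ (F : Type) (_ : Group F) (_ : Finite F) (φ : G →* F), φ g ≠ 1

/-- A group is residually `p` if every nontrivial element survives in some finite `p`-group
quotient. -/
def ResiduallyP (p : ℕ) (G : Type*) [Group G] : Prop :=
  ∀ g : G, g ≠ 1 →
    ∃ (F : Type) (_ : Group F) (_ : Finite F) (φ : G →* F), IsPGroup p F ∧ φ g ≠ 1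

/-- A group is virtually residually `p` if some finite-index subgroup is residually `p`. -/
def VirtuallyResiduallyP (p : ℕ) (G : Type*) [Group G] : Prop :=
  ∃ K : Subgroup G, K.FiniteIndex ∧ ResiduallyP p ↥K

/-- `Aut_{H̲}(G)`: the subgroup of automorphisms of `G` fixing `H` pointwise. -/
def autFix (H : Subgroup G) : Subgroup (MulAut G) where
  carrier := {φ | ∀ h ∈ H, φ h = h}
  one_mem' := fun _ _ => rfl
  mul_mem' := by
    intro a b ha hb h hh
    show a (b h) = h
    rw [hb h hh, ha h hh]
  inv_mem' := by
    intro a ha h hh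
    show a⁻¹ h = h
    calc a⁻¹ h = a⁻¹ (a h) := by rw [ha h hh]
    _ = h := by rw [MulAut.inv_def]; exact a.symm_apply_apply h

/-- `Aut_H(G)`: the subgroup of automorphisms of `G` mapping `H` onto itself. -/
def autSetwise (H : Subgroup G) : Subgroup (MulAut G) where
  carrier := {φ | ∀ g : G, φ g ∈ H ↔ g ∈ H}
  one_mem' := fun _ => Iff.rfl
  mul_mem' := by
    intro a b ha hb g
    show a (b g) ∈ H ↔ g ∈ H
    rw [ha, hb]
  inv_mem' := by
    intro a ha g
    show a⁻¹ g ∈ H ↔ g ∈ H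
    have h1 : a (a⁻¹ g) = g := by rw [MulAut.inv_def]; exact a.apply_symm_apply g
    have := ha (a⁻¹ g)
    rw [h1] at this
    exact this.symm

theorem mem_autSetwise {H : Subgroup G} {φ : MulAut G} :
    φ ∈ autSetwise G H ↔ ∀ g : G, φ g ∈ H ↔ g ∈ H := Iff.rfl

/-- `H` is an Aut-splitting subgroup of `G` if the restriction of `Aut(G) → Out(G)` to
`Aut_{H̲}(G)` has finite kernel and an image of finite index in `Out(G)`. -/
def IsAutSplitting (H : Subgroup G) : Prop :=
  Finite ((outProj G).comp (autFix G H).subtype).ker ∧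
    ((autFix G H).map (outProj G)).FiniteIndex

/-- The conjugate `gKg⁻¹` of a subgroup. -/
def conjSubgroup (g : G) (K : Subgroup G) : Subgroup G :=
  K.map (MulAut.conj g).toMonoidHom

end Defs

/-! The kernel of `Aut_{H̲}(G) → Out(G)` consists of the conjugations by elements of `C_G(H)`, so
it is a quotient of `C_G(H)/Z(G)`.

For the image, `φ ↦ φ(H)` sends the cosets of `Aut_H(G) · Inn(G)` in `Aut(G)` injectively to
conjugacy classes of subgroups isomorphic to `H`, so the image of `Aut_H(G)` has finite index in
`Out(G)`. Restriction to `H` maps `Aut_H(G)` to the finite group `Out(H)`, and an element whose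
restriction is conjugation by `h ∈ H` is `c_h` times an element of `Aut_{H̲}(G)`; hence the image
of `Aut_{H̲}(G)` has finite index in that of `Aut_H(G)`. -/

open scoped Pointwise

namespace Subgroup

variable {A β : Type*} [Group A] [Finite β]

theorem finiteIndex_of_eq_imp_inv_mul_mem (P : Subgroup A) (F : A → β)
    (hF : ∀ a b, F a = F b → a⁻¹ * b ∈ P) : P.FiniteIndex := by
  have : Finite (A ⧸ P) := Finite.of_injective (fun q : A ⧸ P ↦ F q.out) fun q₁ q₂ h ↦ by
    rw [← QuotientGroup.out_eq' q₁, ← QuotientGroup.out_eq' q₂]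
    exact QuotientGroup.eq.mpr (hF _ _ h)
  exact finiteIndex_of_finite_quotient

end Subgroup

section

variable {G : Type*} [Group G] {H : Subgroup G}

theorem conjSubgroup_eq_smul (g : G) (K : Subgroup G) :
    conjSubgroup G g K = MulAut.conj g • K := rfl

theorem mem_autSetwise_iff_smul_eq {φ : MulAut G} : φ ∈ autSetwise G H ↔ φ • H = H := by
  rw [mem_autSetwise]
  constructor
  · intro hφ
    ext x
    rw [Subgroup.mem_smul_pointwise_iff_exists]
    refine ⟨?_, fun hx ↦ ⟨φ⁻¹ • x, (hφ _).mp ?_, smul_inv_smul φ x⟩⟩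
    · rintro ⟨y, hy, rfl⟩
      exact (hφ y).mpr hy
    · show φ • φ⁻¹ • x ∈ H
      rwa [smul_inv_smul]
  · intro hφ g
    conv_lhs => rw [← hφ]
    exact Subgroup.smul_mem_pointwise_smul_iff

theorem ker_outProj : (outProj G).ker = Inn G := QuotientGroup.ker_mk' _

theorem autFix_le_autSetwise : autFix G H ≤ autSetwise G H := by
  intro φ hφ
  rw [mem_autSetwise_iff_smul_eq]
  ext x
  rw [Subgroup.mem_smul_pointwise_iff_exists]
  constructor
  · rintro ⟨y, hy, rfl⟩
    rwa [show φ • y = y from hφ y hy]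
  · exact fun hx ↦ ⟨x, hx, hφ x hx⟩

theorem outProj_eq_one_of_mem_inn {φ : MulAut G} (hφ : φ ∈ Inn G) : outProj G φ = 1 := by
  rwa [← MonoidHom.mem_ker, ker_outProj]

theorem outProj_surjective : Function.Surjective (outProj G) := QuotientGroup.mk'_surjective _

variable (H) in
def centralizerConj : Subgroup.centralizer (H : Set G) →* autFix G H :=
  (MulAut.conj.comp (Subgroup.centralizer _).subtype).codRestrict (autFix G H) fun g h hh ↦ by
    show (g : G) * h * (g : G)⁻¹ = h
    rw [← Subgroup.mem_centralizer_iff.mp g.2 h hh, mul_inv_cancel_right]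

theorem ker_outProj_comp_autFix_subtype :
    ((outProj G).comp (autFix G H).subtype).ker = (centralizerConj H).range := by
  ext ⟨φ, hφ⟩
  rw [MonoidHom.mem_ker, MonoidHom.comp_apply, ← MonoidHom.mem_ker, ker_outProj]
  constructor
  · rintro ⟨g, rfl⟩
    have hg : g ∈ Subgroup.centralizer (H : Set G) := Subgroup.mem_centralizer_iff.mpr fun h hh ↦
      (by simpa [mul_inv_eq_iff_eq_mul] using hφ h hh : g * h = h * g).symm
    exact ⟨⟨g, hg⟩, rfl⟩
  · rintro ⟨g, hg⟩
    exact ⟨g, congrArg Subtype.val hg⟩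

theorem finite_ker_outProj_comp_autFix_subtype
    (hcent : (Subgroup.center G).relIndex (Subgroup.centralizer (H : Set G)) ≠ 0) :
    Finite ((outProj G).comp (autFix G H).subtype).ker := by
  have hcenter_le : (Subgroup.center G).subgroupOf (Subgroup.centralizer (H : Set G)) ≤
      (centralizerConj H).ker := fun g hg ↦ by
    ext x
    show (g : G) * x * (g : G)⁻¹ = x
    rw [← Subgroup.mem_center_iff.mp (Subgroup.mem_subgroupOf.mp hg) x, mul_inv_cancel_right]
  have hindex := ne_zero_of_dvd_ne_zero hcent (Subgroup.index_dvd_of_le hcenter_le)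
  rw [Subgroup.index_ker] at hindex
  rw [ker_outProj_comp_autFix_subtype]
  exact Nat.finite_of_card_ne_zero hindex

theorem inv_mul_mem_autSetwise_sup_inn {a b c : MulAut G} (hc : c ∈ Inn G)
    (h : c • a • H = b • H) : a⁻¹ * b ∈ autSetwise G H ⊔ Inn G := by
  have hstab : a⁻¹ * c⁻¹ * b ∈ autSetwise G H := by
    rw [mem_autSetwise_iff_smul_eq, mul_smul, mul_smul, ← h, inv_smul_smul, inv_smul_smul]
  have hinn : b⁻¹ * c * b ∈ Inn G := by simpa using (Inn.normal G).conj_mem c hc b⁻¹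
  simpa [mul_assoc] using Subgroup.mul_mem_sup hstab hinn

theorem finiteIndex_map_autSetwise
    (hconj : ∃ S : Finset (Subgroup G), ∀ K : Subgroup G, Nonempty (↥K ≃* ↥H) →
      ∃ K' ∈ S, ∃ g : G, conjSubgroup G g K = K') :
    ((autSetwise G H).map (outProj G)).FiniteIndex := by
  obtain ⟨S, hS⟩ := hconj
  choose σ hσS g hg using fun φ : MulAut G ↦ hS (φ • H) ⟨(Subgroup.equivSMul φ H).symm⟩
  have : (autSetwise G H ⊔ Inn G).FiniteIndex := by
    refine Subgroup.finiteIndex_of_eq_imp_inv_mul_mem _ (fun φ ↦ (⟨σ φ, hσS φ⟩ : S))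
      fun a b hab ↦ inv_mul_mem_autSetwise_sup_inn ⟨(g b)⁻¹ * g a, rfl⟩ ?_
    rw [map_mul, mul_smul, ← conjSubgroup_eq_smul (g a), hg, Subtype.mk.inj hab, ← hg b,
      conjSubgroup_eq_smul, ← mul_smul, map_inv, inv_mul_cancel, one_smul]
  rw [← ker_outProj, ← Subgroup.comap_map_eq] at this
  exact ⟨Subgroup.index_comap_of_surjective _ (outProj_surjective (G := G)) ▸ this.index_ne_zero⟩

variable (H) in
def autSetwiseRestrict : autSetwise G H →* MulAut H where
  toFun φ := (φ.1.subgroupMap H).trans (MulEquiv.subgroupCongr (mem_autSetwise_iff_smul_eq.mp φ.2))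
  map_one' := rfl
  map_mul' _ _ := rfl

theorem outProj_mem_map_autFix {φ : autSetwise G H} (hφ : autSetwiseRestrict H φ ∈ Inn H) :
    outProj G φ ∈ (autFix G H).map (outProj G) := by
  obtain ⟨h, hh⟩ := hφ
  refine ⟨(MulAut.conj (h : G))⁻¹ * φ, fun x hx ↦ ?_, ?_⟩
  · have hφx : φ.1 x = h * x * h⁻¹ := congrArg (fun ψ : MulAut H ↦ (ψ ⟨x, hx⟩ : G)) hh.symm
    simp [hφx, mul_assoc]
  · rw [map_mul, map_inv, outProj_eq_one_of_mem_inn ⟨(h : G), rfl⟩, inv_one, one_mul]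

theorem relIndex_map_autFix_map_autSetwise_ne_zero [Finite (Out H)] :
    ((autFix G H).map (outProj G)).relIndex ((autSetwise G H).map (outProj G)) ≠ 0 := by
  rw [← Subgroup.relIndex_comap]
  have hle : ((outProj H).comp (autSetwiseRestrict H)).ker ≤
      (((autFix G H).map (outProj G)).comap (outProj G)).subgroupOf (autSetwise G H) :=
    fun φ hφ ↦ outProj_mem_map_autFix (by rwa [MonoidHom.mem_ker, MonoidHom.comp_apply,
      ← MonoidHom.mem_ker, ker_outProj] at hφ)
  exact ne_zero_of_dvd_ne_zero (Subgroup.finiteIndex_ker _).index_ne_zero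
    (Subgroup.index_dvd_of_le hle)

end

/-- If there are finitely many conjugacy classes of subgroups of `G`
isomorphic to `H`, `Out(H)` is finite, and `Z(G)` has finite index in `C_G(H)`, then `H` is an
Aut-splitting subgroup of `G`. -/
theorem statement15 (G : Type*) [Group G] (H : Subgroup G)
    (hconj : ∃ S : Finset (Subgroup G), ∀ K : Subgroup G, Nonempty (↥K ≃* ↥H) →
      ∃ K' ∈ S, ∃ g : G, conjSubgroup G g K = K')
    (hout : Finite (Out ↥H))
    (hcent : (Subgroup.center G).relIndex (Subgroup.centralizer (H : Set G)) ≠ 0) :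
    IsAutSplitting G H := by
  refine ⟨finite_ker_outProj_comp_autFix_subtype hcent, ⟨?_⟩⟩
  rw [← Subgroup.relIndex_mul_index (Subgroup.map_mono autFix_le_autSetwise)]
  exact mul_ne_zero relIndex_map_autFix_map_autSetwise_ne_zero
    (finiteIndex_map_autSetwise hconj).index_ne_zero
end

section
/- Let G be a group admitting a self-normalized Aut-splitting subgroup H (i.e. N_G(H) = H) whose center Z(H) is trivial. Then the restriction of the canonical projection f : Aut(G) → Out(G) to Aut_{H̲}(G) is injective, and consequently the map f : Aut(G) → Out(G) splits virtually. -/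
theorem conj_mem_autFix_iff {G : Type*} [Group G] {H : Subgroup G} {g : G} :
    MulAut.conj g ∈ autFix G H ↔ g ∈ Subgroup.centralizer (H : Set G) := by
  rw [Subgroup.mem_centralizer_iff]
  refine forall₂_congr fun h _ => ?_
  rw [MulAut.conj_apply, mul_inv_eq_iff_eq_mul, eq_comm]

theorem eq_one_of_mem_of_mem_centralizer {G : Type*} [Group G] {H : Subgroup G}
    (hcenter : Subgroup.center H = ⊥) {g : G} (hgH : g ∈ H)
    (hg : g ∈ Subgroup.centralizer (H : Set G)) : g = 1 := by
  have hz : (⟨g, hgH⟩ : H) ∈ Subgroup.center H :=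
    Subgroup.mem_center_iff.mpr fun h => Subtype.ext (Subgroup.mem_centralizer_iff.mp hg h h.2)
  rw [hcenter, Subgroup.mem_bot] at hz
  exact congrArg Subtype.val hz

theorem injective_outProj_comp_autFix {G : Type*} [Group G] {H : Subgroup G}
    (hself : Subgroup.normalizer (H : Set G) = H) (hcenter : Subgroup.center H = ⊥) :
    Function.Injective ((outProj G).comp (autFix G H).subtype) := by
  rw [injective_iff_map_eq_one]
  rintro ⟨φ, hφ⟩ hinn
  obtain ⟨g, rfl⟩ : φ ∈ Inn G := (QuotientGroup.eq_one_iff φ).mp hinn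
  have hcent : g ∈ Subgroup.centralizer (H : Set G) := conj_mem_autFix_iff.mp hφ
  have hgH : g ∈ H := hself ▸ Subgroup.centralizer_le_normalizer _ hcent
  simp [eq_one_of_mem_of_mem_centralizer hcenter hgH hcent]

theorem splitsVirtually_of_injective_comp_subtype {A B : Type*} [Group A] [Group B]
    (f : A →* B) (K : Subgroup A) (hinj : Function.Injective (f.comp K.subtype))
    (hindex : (K.map f).FiniteIndex) : SplitsVirtually f := by
  refine ⟨(f.comp K.subtype).range, ?_,
    K.subtype.comp (MonoidHom.ofInjective hinj).symm.toMonoidHom,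
    MonoidHom.apply_ofInjective_symm hinj⟩
  rwa [MonoidHom.range_comp, Subgroup.range_subtype]

/-- If `H` is a self-normalized Aut-splitting subgroup of `G` with trivial
center, then the restriction of `Aut(G) → Out(G)` to `Aut_{H̲}(G)` is injective, and
`Aut(G) → Out(G)` splits virtually. -/
theorem statement16 (G : Type*) [Group G] (H : Subgroup G) (hself : Subgroup.normalizer (H : Set G) = H)
    (hsplit : IsAutSplitting G H) (hcenter : Subgroup.center ↥H = ⊥) :
    Function.Injective ((outProj G).comp (autFix G H).subtype) ∧
      SplitsVirtually (outProj G) := by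
  have hinj := injective_outProj_comp_autFix hself hcenter
  exact ⟨hinj, splitsVirtually_of_injective_comp_subtype _ _ hinj hsplit.2⟩
end
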